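/- arXiv:1103.3873 — 3 statements merged into one kernel-verified Lean document; each statement's English description precedes it below -/
import Mathlib

section
/- Let F be a free group on a set Z and let {w_i : i ∈ I} be a set of words satisfying the small cancellation condition C'(1/12). Then the subgroup of F generated by {w_i} is free, freely generated by the w_i. -/
namespace Paper

/-- The formal inverse of a signed word. -/
def wordInv {α : Type} (w : List (α × Bool)) : List (α × Bool) :=
  (w.map fun p => (p.1, !p.2)).reverse

/-- `u` is a cyclic shift of `w` or of `w⁻¹`. -/
def CyclicShiftOf {α : Type} (w u : List (α × Bool)) : Prop :=
  ∃ n : ℕ, u = w.rotate n ∨ u = (wordInv w).rotate n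

/-- The small cancellation condition `C'(1/12)` for a set of words:
for every two different cyclic shifts `u, v` of words in `Q^{±1}`, the length of
their maximal common prefix is smaller than `(1/12)·min(|u|,|v|)`. -/
def C12 {α : Type} (Q : Set (List (α × Bool))) : Prop :=
  ∀ u v : List (α × Bool),
    (∃ w ∈ Q, CyclicShiftOf w u) → (∃ w ∈ Q, CyclicShiftOf w v) → u ≠ v →
      ∀ p : List (α × Bool), p <+: u → p <+: v → 12 * p.length < min u.length v.length

/-- The small cancellation condition `C'(1/12)` for an indexed family of words. -/
def FamC12 {ι α : Type} (w : ι → List (α × Bool)) : Prop :=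
  ∀ (a b : ι) (u v : List (α × Bool)),
    CyclicShiftOf (w a) u → CyclicShiftOf (w b) v → ¬(a = b ∧ u = v) →
      ∀ p : List (α × Bool), p <+: u → p <+: v → 12 * p.length < min u.length v.length

/-- A positive word, viewed as a signed word. -/
def signed {α : Type} (w : List α) : List (α × Bool) := w.map fun c => (c, true)

/-- `C'(1/12)` for a set of positive words. -/
def posC12 {α : Type} (Q : Set (List α)) : Prop := C12 (signed '' Q)

/-- A signed word is (freely) reduced. -/
def ReducedW {α : Type} [DecidableEq α] (w : List (α × Bool)) : Prop :=
  FreeGroup.reduce w = w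

/-- A signed word is cyclically reduced. -/
def CyclicallyReducedW {α : Type} [DecidableEq α] (w : List (α × Bool)) : Prop :=
  FreeGroup.reduce (w ++ w) = w ++ w

end Paper

/-!
Substitute the words `w_i^{±1}` for the letters of a nonempty reduced word in `ι` and reduce
freely from left to right. At each junction only a piece can cancel, which by `C'(1/12)` is
shorter than a twelfth of either word involved; so after each step more than eleven twelfths of
the last substituted word survive, and this surviving tail is never cancelled entirely by the
next piece. Hence the reduced image is nonempty.
-/

namespace FreeGroup

variable {α : Type*} {L L₁ L₂ : List (α × Bool)}

theorem invRev_prefix_invRev_of_suffix (h : L₁ <:+ L₂) : invRev L₁ <+: invRev L₂ :=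
  (h.map _).reverse

theorem invRev_ne_self_of_isReduced_append_self (h : IsReduced (L ++ L)) (hL : L ≠ []) :
    invRev L ≠ L := by
  intro hinv
  obtain ⟨L', ⟨x, b⟩, rfl⟩ := (List.eq_nil_or_concat' L).resolve_left hL
  have hsplit : L' ++ [(x, b)] ++ (L' ++ [(x, b)]) = L' ++ (x, b) :: (x, !b) :: invRev L' := by
    nth_rewrite 2 [← hinv]
    simp [invRev]
  rw [hsplit] at h
  exact h.not_step Red.Step.not

variable [DecidableEq α]

theorem isReduced_invRev (h : IsReduced L) : IsReduced (invRev L) := by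
  rw [isReduced_iff_reduce_eq] at h ⊢
  rw [reduce_invRev, h]

theorem isReduced_reduce (L : List (α × Bool)) : IsReduced (reduce L) :=
  IsReduced.of_reduce_eq reduce.idem

theorem IsReduced.exists_reduce_append_eq (h₁ : IsReduced L₁) (h₂ : IsReduced L₂) :
    ∃ L₁' c L₂', L₁ = L₁' ++ c ∧ L₂ = invRev c ++ L₂' ∧
      reduce (L₁ ++ L₂) = L₁' ++ L₂' := by
  induction L₁ using List.reverseRecOn generalizing L₂ with
  | nil => exact ⟨[], [], L₂, rfl, rfl, h₂.reduce_eq⟩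
  | append_singleton L₁ p ih =>
    rcases L₂ with _ | ⟨⟨x, b⟩, L₂⟩
    · exact ⟨L₁ ++ [p], [], [], by simp, rfl, by simpa using h₁.reduce_eq⟩
    by_cases hpx : p.1 = x → p.2 = b
    · have hjunction : IsReduced ([p] ++ (x, b) :: L₂) := isReduced_cons_cons.mpr ⟨hpx, h₂⟩
      exact ⟨L₁ ++ [p], [], (x, b) :: L₂, by simp, rfl,
        (h₁.append_overlap hjunction (List.cons_ne_nil _ _)).reduce_eq⟩
    · obtain ⟨hx, hb⟩ := Classical.not_imp.mp hpx
      obtain rfl : p = (x, !b) := Prod.ext hx (Bool.eq_not_iff.mpr hb)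
      obtain ⟨L₁', c, L₂', rfl, rfl, hreduce⟩ :=
        ih (h₁.infix (List.prefix_append _ _).isInfix) (h₂.infix (List.suffix_cons _ _).isInfix)
      refine ⟨L₁', c ++ [(x, !b)], L₂', by simp, by simp [invRev], ?_⟩
      rw [← hreduce]
      exact reduce.Step.eq (by simpa using Red.Step.not_rev (L₁ := L₁' ++ c))

end FreeGroup

namespace Paper

open FreeGroup

variable {Z ι : Type} {w : ι → List (Z × Bool)}

def letterWord (w : ι → List (Z × Bool)) (p : ι × Bool) : List (Z × Bool) :=
  bif p.2 then w p.1 else invRev (w p.1)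

theorem length_letterWord (p : ι × Bool) : (letterWord w p).length = (w p.1).length := by
  cases h : p.2 <;> simp [letterWord, h, invRev_length]

theorem letterWord_ne_nil (hne : ∀ i, w i ≠ []) (p : ι × Bool) : letterWord w p ≠ [] := by
  rw [← List.length_pos_iff, length_letterWord, List.length_pos_iff]
  exact hne p.1

theorem wordInv_eq_invRev (L : List (Z × Bool)) : wordInv L = invRev L := rfl

theorem cyclicShiftOf_letterWord (p : ι × Bool) : CyclicShiftOf (w p.1) (letterWord w p) :=
  ⟨0, by cases h : p.2 <;> simp [letterWord, h, wordInv_eq_invRev]⟩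

theorem cyclicShiftOf_invRev_letterWord (p : ι × Bool) :
    CyclicShiftOf (w p.1) (invRev (letterWord w p)) :=
  ⟨0, by cases h : p.2 <;> simp [letterWord, h, wordInv_eq_invRev, invRev_invRev]⟩

theorem lift_mk_eq_mk_flatMap_letterWord (w : ι → List (Z × Bool)) (L : List (ι × Bool)) :
    lift (fun i => mk (w i)) (mk L) = mk (L.flatMap (letterWord w)) := by
  induction L with
  | nil => simp [← one_eq_mk]
  | cons p L ih =>
    have hp : lift (fun i => mk (w i)) (mk [p]) = mk (letterWord w p) := by
      obtain ⟨i, _ | _⟩ := p <;> simp [letterWord, lift_mk, inv_mk]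
    rw [List.flatMap_cons, ← mul_mk, ← ih, ← hp, ← _root_.map_mul, mul_mk,
      List.singleton_append]

section Reduction

variable [DecidableEq Z]

theorem isReduced_letterWord_append_self (hred : ∀ i, CyclicallyReducedW (w i))
    (p : ι × Bool) : IsReduced (letterWord w p ++ letterWord w p) := by
  have h := IsReduced.of_reduce_eq (hred p.1)
  cases hp : p.2
  · simpa [letterWord, hp, invRev_append] using isReduced_invRev h
  · simpa [letterWord, hp] using h

theorem isReduced_letterWord (hred : ∀ i, CyclicallyReducedW (w i)) (p : ι × Bool) :
    IsReduced (letterWord w p) :=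
  (isReduced_letterWord_append_self hred p).infix (List.prefix_append _ _).isInfix

/-- What cancels between the images of two adjacent, mutually non-inverse letters is a piece. -/
theorem twelve_mul_length_lt_of_cancel (hC : FamC12 w) (hred : ∀ i, CyclicallyReducedW (w i))
    (hne : ∀ i, w i ≠ []) {p q : ι × Bool} (hpq : p.1 = q.1 → p.2 = q.2)
    {c : List (Z × Bool)} (hp : c <:+ letterWord w p) (hq : invRev c <+: letterWord w q) :
    12 * c.length < min (letterWord w p).length (letterWord w q).length := by
  have hdistinct : ¬(p.1 = q.1 ∧ invRev (letterWord w p) = letterWord w q) := by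
    rintro ⟨h₁, h₂⟩
    obtain rfl : p = q := Prod.ext h₁ (hpq h₁)
    exact invRev_ne_self_of_isReduced_append_self (isReduced_letterWord_append_self hred p)
      (letterWord_ne_nil hne p) h₂
  simpa [invRev_length] using hC p.1 q.1 _ _ (cyclicShiftOf_invRev_letterWord p)
    (cyclicShiftOf_letterWord q) hdistinct _ (invRev_prefix_invRev_of_suffix hp) hq

theorem exists_reduce_append_letterWord_eq (hC : FamC12 w)
    (hred : ∀ i, CyclicallyReducedW (w i)) (hne : ∀ i, w i ≠ []) {p q : ι × Bool}
    (hpq : p.1 = q.1 → p.2 = q.2) {r t : List (Z × Bool)} (hrt : IsReduced (r ++ t))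
    (ht : t <:+ letterWord w p) (hlen : 11 * (letterWord w p).length < 12 * t.length) :
    ∃ r' t', reduce (r ++ t ++ letterWord w q) = r' ++ t' ∧ t' <:+ letterWord w q ∧
      11 * (letterWord w q).length < 12 * t'.length := by
  obtain ⟨r', c, t', hc, hq, hreduce⟩ :=
    IsReduced.exists_reduce_append_eq hrt (isReduced_letterWord hred q)
  -- otherwise all of `t` cancels, and `invRev t` is a piece longer than `|letterWord w p| / 12`
  have hct : c <:+ t := by
    rcases List.suffix_or_suffix_of_suffix ⟨r', hc.symm⟩ (List.suffix_append r t) with h | h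
    · exact h
    · have := twelve_mul_length_lt_of_cancel hC hred hne hpq ht
        ((invRev_prefix_invRev_of_suffix h).trans ⟨t', hq.symm⟩)
      have := min_le_left (letterWord w p).length (letterWord w q).length
      omega
  have hpiece := twelve_mul_length_lt_of_cancel hC hred hne hpq (hct.trans ht) ⟨t', hq.symm⟩
  have := min_le_right (letterWord w p).length (letterWord w q).length
  have hlen_q : (letterWord w q).length = c.length + t'.length := by
    rw [hq, List.length_append, invRev_length]
  exact ⟨r', t', hreduce, ⟨invRev c, hq.symm⟩, by omega⟩

theorem exists_reduce_flatMap_letterWord_eq (hC : FamC12 w)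
    (hred : ∀ i, CyclicallyReducedW (w i)) (hne : ∀ i, w i ≠ []) {M : List (ι × Bool)}
    {p : ι × Bool} (hM : IsReduced (M ++ [p])) :
    ∃ r t, reduce ((M ++ [p]).flatMap (letterWord w)) = r ++ t ∧ t <:+ letterWord w p ∧
      11 * (letterWord w p).length < 12 * t.length := by
  induction M using List.reverseRecOn generalizing p with
  | nil =>
    have := List.length_pos_iff.mpr (letterWord_ne_nil hne p)
    exact ⟨[], letterWord w p, by simpa using (isReduced_letterWord hred p).reduce_eq,
      List.suffix_refl _, by omega⟩
  | append_singleton M p' ih =>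
    obtain ⟨r, t, hrt, ht, hlen⟩ := ih (hM.infix ⟨[], [p], rfl⟩)
    have hpq : p'.1 = p.1 → p'.2 = p.2 :=
      (isReduced_cons_cons.mp (hM.infix (⟨M, [], by simp⟩ : [p', p] <:+: _))).1
    rw [List.flatMap_append, ← reduce_append_reduce_reduce, hrt, List.flatMap_singleton,
      (isReduced_letterWord hred p).reduce_eq]
    exact exists_reduce_append_letterWord_eq hC hred hne hpq (hrt ▸ isReduced_reduce _) ht hlen

end Reduction

/-- If `{w_i : i ∈ I}` is a family of (nonempty, cyclically reduced) words over
the alphabet `Z` satisfying the small cancellation condition `C'(1/12)`, then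
the subgroup of the free group `F(Z)` generated by the `w_i` is free, freely
generated by the `w_i`: the induced homomorphism from the free group on `I`
is injective. -/
theorem free_basis_of_small_cancellation {Z ι : Type} [DecidableEq Z]
    (w : ι → List (Z × Bool))
    (hred : ∀ i, CyclicallyReducedW (w i)) (hne : ∀ i, w i ≠ [])
    (hC : FamC12 w) :
    Function.Injective
      (FreeGroup.lift (fun i => FreeGroup.mk (w i)) : FreeGroup ι →* FreeGroup Z) := by
  classical
  rw [injective_iff_map_eq_one]
  intro g hg
  by_contra hg1
  obtain ⟨M, p, hMp⟩ :=
    (List.eq_nil_or_concat' g.toWord).resolve_left (mt toWord_eq_nil_iff.mp hg1)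
  obtain ⟨r, t, hrt, -, hlen⟩ :=
    exists_reduce_flatMap_letterWord_eq hC hred hne (hMp ▸ isReduced_toWord)
  have himage : reduce (g.toWord.flatMap (letterWord w)) = [] := by
    rw [← toWord_mk, ← lift_mk_eq_mk_flatMap_letterWord, mk_toWord, hg, toWord_one]
  rw [hMp, hrt, List.append_eq_nil_iff] at himage
  simp [himage.2] at hlen

end Paper
end

section
/- Let P = ⟨M₁, M₂ ∣ L₁, L₂, xᵢ yᵢ⁻¹ (i ∈ I)⟩ with xᵢ words over M₁ and yᵢ words over M₂ be the standard presentation of an amalgamated product. If ⟨M₁ ∣ L₁⟩ and ⟨M₂ ∣ L₂⟩ are combinatorially aspherical presentations and {xᵢ : i ∈ I} and {yᵢ : i ∈ I} each freely generate free subgroups of the respective groups, then P is combinatorially aspherical. -/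
namespace Paper

/-- The canonical projection from the free group onto a presented group. -/
def pgMk {α : Type} (rels : Set (FreeGroup α)) : FreeGroup α →* PresentedGroup rels :=
  QuotientGroup.mk' (Subgroup.normalClosure rels)

/-- The map sending a formal conjugate `(f, r)` of a relator to the element
`f r f⁻¹` of the free group.  Elements of its kernel are the identities among
the relations of the presentation. -/
def idMap {α : Type} (R : Set (FreeGroup α)) : FreeGroup (FreeGroup α × R) →* FreeGroup α :=
  FreeGroup.lift fun p => p.1 * (p.2 : FreeGroup α) * p.1⁻¹

/-- The Peiffer elements among formal products of conjugates of relators. -/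
def PeifferSet {α : Type} (R : Set (FreeGroup α)) : Set (FreeGroup (FreeGroup α × R)) :=
  { x | ∃ (f g : FreeGroup α) (r s : R),
      x = FreeGroup.of (f, r) * FreeGroup.of (g, s) * (FreeGroup.of (f, r))⁻¹ *
          (FreeGroup.of (f * (r : FreeGroup α) * f⁻¹ * g, s))⁻¹ }

/-- A presentation is combinatorially (Peiffer) aspherical iff every spherical
diagram over it is combinatorially homotopic to the empty diagram; algebraically,
every identity among the relations is a consequence of the Peiffer elements. -/
def CombAspherical {α : Type} (R : Set (FreeGroup α)) : Prop :=
  MonoidHom.ker (idMap R) = Subgroup.normalClosure (PeifferSet R)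

end Paper

/-!
An identity among the relations is a consequence of the Peiffer elements as soon as its image in
the free `ℤG`-module on the relators vanishes: in the free crossed module `C → N` the kernel of the
boundary is central, and `N`, a subgroup of a free group, is free; so `C` splits over `N` and the
kernel meets `[C, C]` trivially.

That image is detected by lifts `Φ : F → (G → A) ⋊ G` of the projection `F → G` taking each
relator `r` to the basis function `γ ↦ e_(γ, r)`. For an aspherical presentation, lifts with
arbitrary prescribed relator values exist (extend the equivariant map that asphericity provides on
the relation subgroup by a Shapiro-type formula). For the amalgam, the factors embed, so each factor
has such a lift; and since the free group on `I` embeds as well, any two lifts on it are conjugate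
by an element of `G → A`. Conjugating the first lift accordingly makes the two lifts agree on the
amalgamating relators `xᵢ yᵢ⁻¹`, so they glue to a lift for the whole presentation.
-/

namespace Paper

open Subgroup SemidirectProduct Monoid

section Identities

variable {α : Type} {R : Set (FreeGroup α)}

@[simp] lemma idMap_of (p : FreeGroup α × R) :
    idMap R (FreeGroup.of p) = p.1 * (p.2 : FreeGroup α) * p.1⁻¹ :=
  FreeGroup.lift_apply_of

lemma range_idMap : (idMap R).range = normalClosure R := by
  rw [idMap, FreeGroup.range_lift_eq_closure, normalClosure]
  congr 1
  ext g
  simp only [Set.mem_range, Prod.exists, Subtype.exists, Group.mem_conjugatesOfSet_iff, isConj_iff]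
  constructor
  · rintro ⟨f, r, hr, rfl⟩
    exact ⟨r, hr, f, rfl⟩
  · rintro ⟨r, hr, f, rfl⟩
    exact ⟨f, r, hr, rfl⟩

lemma normalClosure_peifferSet_le_ker : normalClosure (PeifferSet R) ≤ (idMap R).ker := by
  refine normalClosure_le_normal ?_
  rintro _ ⟨f, g, r, s, rfl⟩
  simp only [SetLike.mem_coe, MonoidHom.mem_ker, map_mul, map_inv, idMap_of]
  group

lemma combAspherical_of_ker_le (h : (idMap R).ker ≤ normalClosure (PeifferSet R)) :
    CombAspherical R :=
  le_antisymm h normalClosure_peifferSet_le_ker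

lemma pgMk_eq_one_iff {w : FreeGroup α} : pgMk R w = 1 ↔ w ∈ normalClosure R :=
  QuotientGroup.eq_one_iff w

lemma pgMk_eq_one_of_mem {r : FreeGroup α} (hr : r ∈ R) : pgMk R r = 1 :=
  pgMk_eq_one_iff.mpr (subset_normalClosure hr)

end Identities

theorem eq_one_of_mem_commutator_of_ker_central {C N : Type*} [Group C] [Group N] [IsFreeGroup N]
    (f : C →* N) (hf : Function.Surjective f) (hcentral : ∀ z ∈ f.ker, ∀ c, Commute z c)
    {k : C} (hk : k ∈ commutator C) (hfk : f k = 1) : k = 1 := by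
  let σ : N →* C := IsFreeGroup.lift fun b => Function.surjInv hf (IsFreeGroup.of b)
  have hσ : f.comp σ = MonoidHom.id N :=
    IsFreeGroup.ext_hom fun b => by simp [σ, IsFreeGroup.lift_of, Function.surjInv_eq hf]
  have hσker (c : C) : c * (σ (f c))⁻¹ ∈ f.ker := by
    simp [← MonoidHom.comp_apply f σ, hσ]
  -- As `f.ker` is central, `c ↦ c (σ (f c))⁻¹` is a homomorphism onto the abelian group `f.ker`.
  let p : C →* C := MonoidHom.mk' (fun c => c * (σ (f c))⁻¹) fun a b => by
    calc a * b * (σ (f (a * b)))⁻¹ = a * ((b * (σ (f b))⁻¹) * (σ (f a))⁻¹) := by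
          simp only [map_mul, mul_inv_rev, mul_assoc]
      _ = a * (σ (f a))⁻¹ * (b * (σ (f b))⁻¹) := by
          rw [(hcentral _ (hσker b) _).eq, mul_assoc]
  have hcomm : commutator C ≤ p.ker := by
    rw [_root_.commutator, commutator_le]
    intro a _ b _
    rw [MonoidHom.mem_ker, map_commutatorElement, commutatorElement_eq_one_iff_commute]
    exact hcentral _ (hσker a) _
  simpa [p, hfk] using hcomm hk

section CrossedModule

variable {α : Type} (R : Set (FreeGroup α))

/-- The free crossed module on the relators. -/
abbrev PeifferQuotient : Type := FreeGroup (FreeGroup α × R) ⧸ normalClosure (PeifferSet R)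

/-- `∏ (fₖ, rₖ)^{±1} ↦ ∑ ±(π fₖ, rₖ)`: the image of a formal product of conjugates in the free
`ℤG`-module on the relators. -/
noncomputable def freeModuleCoord :
    FreeGroup (FreeGroup α × R) →* Multiplicative (PresentedGroup R × R →₀ ℤ) :=
  FreeGroup.lift fun p => .ofAdd (.single (pgMk R p.1, p.2) 1)

namespace PeifferQuotient

abbrev mk : FreeGroup (FreeGroup α × R) →* PeifferQuotient R := QuotientGroup.mk' _

def boundary : PeifferQuotient R →* (idMap R).range :=
  QuotientGroup.lift _ (idMap R).rangeRestrict
    (by rw [MonoidHom.ker_rangeRestrict]; exact normalClosure_peifferSet_le_ker)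

noncomputable def ofFreeModule :
    Multiplicative (PresentedGroup R × R →₀ ℤ) →* Abelianization (PeifferQuotient R) :=
  AddMonoidHom.toMultiplicativeLeft <| Finsupp.liftAddHom fun p =>
    zmultiplesHom _ (.ofMul (Abelianization.of (mk R (.of (p.1.out, p.2)))))

variable {R}

lemma mk_conj_mk_of (u : FreeGroup (FreeGroup α × R)) (q : FreeGroup α × R) :
    mk R u * mk R (.of q) * (mk R u)⁻¹ = mk R (.of (idMap R u * q.1, q.2)) := by
  induction u using FreeGroup.induction_on generalizing q with
  | C1 => simp
  | of p =>
    rw [← map_inv, ← map_mul, ← map_mul, ← mul_inv_eq_one, ← map_inv, ← map_mul,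
      QuotientGroup.mk'_apply, QuotientGroup.eq_one_iff]
    exact subset_normalClosure ⟨p.1, q.1, p.2, q.2, by simp [mul_assoc]⟩
  | inv_of p ih =>
    have h := ih ((idMap R (.of p))⁻¹ * q.1, q.2)
    rw [mul_inv_cancel_left] at h
    rw [← h, map_inv, map_inv, inv_inv]
    group
  | mul a b iha ihb =>
    rw [map_mul, map_mul, mul_assoc (idMap R a), ← iha (_, q.2), ← ihb]
    group

lemma commute_mk_of_idMap_eq_one {u : FreeGroup (FreeGroup α × R)} (hu : idMap R u = 1)
    (c : PeifferQuotient R) : Commute (mk R u) c := by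
  have hconj : (MulAut.conj (mk R u)).toMonoidHom.comp (mk R) = mk R := by
    refine FreeGroup.ext_hom _ _ fun q => ?_
    simpa [hu] using mk_conj_mk_of u q
  obtain ⟨v, rfl⟩ := QuotientGroup.mk'_surjective _ c
  have := DFunLike.congr_fun hconj v
  simp only [MonoidHom.comp_apply, MulEquiv.coe_toMonoidHom, MulAut.conj_apply] at this
  exact mul_inv_eq_iff_eq_mul.mp this

lemma boundary_surjective : Function.Surjective (boundary R) :=
  QuotientGroup.lift_surjective_of_surjective _ _ (idMap R).rangeRestrict_surjective _

lemma commute_of_mem_ker_boundary {z : PeifferQuotient R} (hz : z ∈ (boundary R).ker)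
    (c : PeifferQuotient R) : Commute z c := by
  obtain ⟨u, rfl⟩ := QuotientGroup.mk'_surjective _ z
  exact commute_mk_of_idMap_eq_one (congrArg Subtype.val hz) c

lemma abelianization_mk_of_mul_mem (f : FreeGroup α) {n : FreeGroup α}
    (hn : n ∈ normalClosure R) (r : R) :
    Abelianization.of (mk R (.of (f * n, r))) = Abelianization.of (mk R (.of (f, r))) := by
  obtain ⟨u, hu⟩ : f * n * f⁻¹ ∈ (idMap R).range := by
    rw [range_idMap]
    exact normalClosure_normal.conj_mem n hn f
  have hconj := mk_conj_mk_of u (f, r)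
  rw [hu, inv_mul_cancel_right] at hconj
  rw [← hconj, map_mul, map_mul, map_inv, mul_comm, inv_mul_cancel_left]

lemma ofFreeModule_freeModuleCoord (w : FreeGroup (FreeGroup α × R)) :
    ofFreeModule R (freeModuleCoord R w) = Abelianization.of (mk R w) := by
  suffices (ofFreeModule R).comp (freeModuleCoord R) = Abelianization.of.comp (mk R) from
    DFunLike.congr_fun this w
  refine FreeGroup.ext_hom _ _ fun p => ?_
  obtain ⟨n, hn⟩ := QuotientGroup.mk_out_eq_mul (normalClosure R) p.1
  have hout : (pgMk R p.1).out = p.1 * n := hn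
  simpa [ofFreeModule, freeModuleCoord, hout] using abelianization_mk_of_mul_mem p.1 n.2 p.2

end PeifferQuotient

open PeifferQuotient in
theorem mem_normalClosure_peifferSet_of_freeModuleCoord_eq_one {R : Set (FreeGroup α)}
    {w : FreeGroup (FreeGroup α × R)} (hid : idMap R w = 1) (hcoord : freeModuleCoord R w = 1) :
    w ∈ normalClosure (PeifferSet R) := by
  rw [← QuotientGroup.eq_one_iff]
  refine eq_one_of_mem_commutator_of_ker_central (boundary R) boundary_surjective
    (fun _ => commute_of_mem_ker_boundary) ?_ (Subtype.ext hid)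
  rw [← Abelianization.ker_of, MonoidHom.mem_ker]
  exact (ofFreeModule_freeModuleCoord w).symm.trans (by rw [hcoord, map_one])

end CrossedModule

lemma _root_.SemidirectProduct.mul_inl_mul_inv {N G : Type*} [CommGroup N] [Group G]
    {φ : G →* MulAut N} (X : N ⋊[φ] G) (n : N) : X * inl n * X⁻¹ = inl (φ X.right n) := by
  ext <;> simp [mul_comm]

section CosetRep

variable {H G : Type*} [Group H] [Group G] (e : H →* G)

noncomputable def cosetRep (γ : G) : G := (γ : G ⧸ e.range).out

lemma exists_cosetRep_mul (γ : G) : ∃ h, cosetRep e γ * e h = γ := by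
  obtain ⟨h, hh⟩ := QuotientGroup.eq.mp (QuotientGroup.out_eq' (γ : G ⧸ e.range))
  exact ⟨h, by rw [hh]; exact mul_inv_cancel_left _ γ⟩

noncomputable def cosetCoord (γ : G) : H := (exists_cosetRep_mul e γ).choose

@[simp] lemma map_cosetCoord (γ : G) : e (cosetCoord e γ) = (cosetRep e γ)⁻¹ * γ :=
  eq_inv_mul_of_mul_eq (exists_cosetRep_mul e γ).choose_spec

@[simp] lemma cosetRep_mul_apply (γ : G) (h : H) : cosetRep e (γ * e h) = cosetRep e γ := by
  have : ((γ * e h : G) : G ⧸ e.range) = γ := QuotientGroup.eq.mpr ⟨h⁻¹, by simp⟩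
  rw [cosetRep, cosetRep, this]

lemma cosetCoord_mul_apply {e : H →* G} (he : Function.Injective e) (γ : G) (h : H) :
    cosetCoord e (γ * e h) = cosetCoord e γ * h :=
  he <| by simp [mul_assoc]

end CosetRep

section Coinduced

variable (G A : Type*) [Group G] [CommGroup A]

def rightTransl : G →* MulAut (G → A) where
  toFun g :=
    { toFun := fun φ γ => φ (γ * g)
      invFun := fun φ γ => φ (γ * g⁻¹)
      left_inv := fun φ => by simp
      right_inv := fun φ => by simp
      map_mul' := fun _ _ => rfl }
  map_one' := by ext; simp
  map_mul' _ _ := by ext; simp [mul_assoc]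

/-- The split extension of `G` by the coinduced module `G → A`. -/
abbrev CoindExt : Type _ := (G → A) ⋊[rightTransl G A] G

variable {G A}

@[simp] lemma rightTransl_apply (g : G) (φ : G → A) (γ : G) :
    rightTransl G A g φ γ = φ (γ * g) := rfl

theorem exists_lift_extending {F : Type*} [Group F] (τ : F →* G) (ν : τ.ker →* (G → A))
    (hν : ∀ (g : F) (n : τ.ker), ν (MulAut.conjNormal g n) = rightTransl G A (τ g) (ν n)) :
    ∃ Φ : F →* CoindExt G A, (∀ f, (Φ f).right = τ f) ∧ ∀ n : τ.ker, Φ n = inl (ν n) := by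
  let t (γ : G) (f : F) : τ.ker := ⟨cosetCoord τ γ * f * (cosetCoord τ (γ * τ f))⁻¹, by
    simp only [MonoidHom.mem_ker, map_mul, map_inv, map_cosetCoord, cosetRep_mul_apply]
    group⟩
  have ht_mul (γ : G) (a b : F) : t γ (a * b) = t γ a * t (γ * τ a) b := by
    ext; simp [t, mul_assoc]
  have ht_ker (γ : G) (n : τ.ker) : t γ n = MulAut.conjNormal (cosetCoord τ γ) n := by
    ext; simp [t, MonoidHom.mem_ker.mp n.2]
  -- Shapiro's lemma: `t γ f` moves `f` into `ker τ` using coset representatives of `range τ`.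
  let d (f : F) : G → A := fun γ => ν (t γ f) (cosetRep τ γ)
  refine ⟨MonoidHom.mk' (fun f => ⟨d f, τ f⟩) fun a b => ?_, fun f => rfl, fun n => ?_⟩
  · ext γ
    · simp [d, ht_mul]
    · simp
  · ext γ
    · show ν (t γ n) (cosetRep τ γ) = ν n γ
      rw [ht_ker, hν, rightTransl_apply, map_cosetCoord, mul_inv_cancel_left]
    · simpa using MonoidHom.mem_ker.mp n.2

theorem exists_eq_conj_inr {H : Type*} [Group H] {e : H →* G} (he : Function.Injective e)
    (Θ : H →* CoindExt G A) (hΘ : ∀ h, (Θ h).right = e h) :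
    ∃ c : G → A, ∀ h, Θ h = inl c * inr (e h) * (inl c)⁻¹ := by
  refine ⟨fun γ => ((Θ (cosetCoord e γ)).left (cosetRep e γ))⁻¹, fun h => ?_⟩
  ext γ
  · have key : (Θ (cosetCoord e (γ * e h))).left (cosetRep e γ) =
        (Θ (cosetCoord e γ)).left (cosetRep e γ) * (Θ h).left γ := by
      rw [cosetCoord_mul_apply he, map_mul, mul_left, Pi.mul_apply, rightTransl_apply, hΘ,
        map_cosetCoord, mul_inv_cancel_left]
    simp [key]
  · simp [hΘ]

theorem exists_conj_eq_of_right_eq {H : Type*} [Group H] {e : H →* G}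
    (he : Function.Injective e) (Θ₁ Θ₂ : H →* CoindExt G A)
    (h₁ : ∀ h, (Θ₁ h).right = e h) (h₂ : ∀ h, (Θ₂ h).right = e h) :
    ∃ c : G → A, ∀ h, Θ₂ h = inl c * Θ₁ h * (inl c)⁻¹ := by
  obtain ⟨c₁, hc₁⟩ := exists_eq_conj_inr he Θ₁ h₁
  obtain ⟨c₂, hc₂⟩ := exists_eq_conj_inr he Θ₂ h₂
  refine ⟨c₂ * c₁⁻¹, fun h => ?_⟩
  rw [hc₁, hc₂, map_mul, map_inv]
  group

theorem exists_equivariant_of_combAspherical {β : Type} {L : Set (FreeGroup β)}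
    (hL : CombAspherical L) (τ : FreeGroup β →* G) (hτ : τ.ker = normalClosure L)
    (E : L → G → A) :
    ∃ ν : τ.ker →* (G → A),
      (∀ (g : FreeGroup β) (n : τ.ker), ν (MulAut.conjNormal g n) = rightTransl G A (τ g) (ν n)) ∧
      ∀ (l : L) (hl : (l : FreeGroup β) ∈ τ.ker), ν ⟨l, hl⟩ = E l := by
  have hτL (l : L) : τ l = 1 := by
    rw [← MonoidHom.mem_ker, hτ]
    exact subset_normalClosure l.2
  let ψ : FreeGroup (FreeGroup β × L) →* (G → A) :=
    FreeGroup.lift fun p => rightTransl G A (τ p.1) (E p.2)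
  have hψ : (idMap L).ker ≤ ψ.ker := by
    rw [hL]
    refine normalClosure_le_normal ?_
    rintro _ ⟨f, g, r, s, rfl⟩
    ext γ
    simp [ψ, hτL, mul_assoc]
  let bd : FreeGroup (FreeGroup β × L) →* τ.ker :=
    (idMap L).codRestrict τ.ker fun w => by rw [hτ, ← range_idMap]; exact ⟨w, rfl⟩
  have hbd : Function.Surjective bd := by
    rintro ⟨n, hn⟩
    rw [hτ, ← range_idMap] at hn
    obtain ⟨w, rfl⟩ := hn
    exact ⟨w, rfl⟩
  -- Asphericity lets `ψ` descend along the boundary to the kernel of `τ`.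
  let ν := bd.liftOfSurjective hbd ⟨ψ, by rwa [MonoidHom.ker_codRestrict]⟩
  have hν (w) : ν (bd w) = ψ w := MonoidHom.liftOfRightInverse_comp_apply _ _ _ _ w
  refine ⟨ν, fun g n => ?_, fun l hl => ?_⟩
  · obtain ⟨w, rfl⟩ := hbd n
    let shift : FreeGroup (FreeGroup β × L) →* FreeGroup (FreeGroup β × L) :=
      FreeGroup.map fun p => (g * p.1, p.2)
    have hbd_shift : (MulAut.conjNormal g).toMonoidHom.comp bd = bd.comp shift :=
      FreeGroup.ext_hom _ _ fun p => by ext; simp [bd, shift, mul_assoc]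
    have hψ_shift : ψ.comp shift = (rightTransl G A (τ g)).toMonoidHom.comp ψ :=
      FreeGroup.ext_hom _ _ fun p => by ext; simp [ψ, shift, mul_assoc]
    have := DFunLike.congr_fun hbd_shift w
    simp only [MonoidHom.comp_apply, MulEquiv.coe_toMonoidHom] at this
    rw [this, hν, hν]
    exact DFunLike.congr_fun hψ_shift w
  · have hl' : bd (.of (1, l)) = ⟨l, hl⟩ := by ext; simp [bd]
    rw [← hl', hν]
    simp [ψ]

theorem exists_lift_of_combAspherical {β : Type} {L : Set (FreeGroup β)} (hL : CombAspherical L)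
    (τ : FreeGroup β →* G) (hτ : τ.ker = normalClosure L) (E : L → G → A) :
    ∃ Φ : FreeGroup β →* CoindExt G A, (∀ f, (Φ f).right = τ f) ∧ ∀ l : L, Φ l = inl (E l) := by
  obtain ⟨ν, hν, hνL⟩ := exists_equivariant_of_combAspherical hL τ hτ E
  obtain ⟨Φ, hright, hker⟩ := exists_lift_extending τ ν hν
  have hτL (l : L) : (l : FreeGroup β) ∈ τ.ker := hτ ▸ subset_normalClosure l.2
  exact ⟨Φ, hright, fun l => (hker ⟨l, hτL l⟩).trans (congrArg inl (hνL l _))⟩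

end Coinduced

section Criterion

variable {α : Type} (R : Set (FreeGroup α))

noncomputable def relatorBasis (r : R) :
    PresentedGroup R → Multiplicative (PresentedGroup R × R →₀ ℤ) :=
  fun γ => .ofAdd (.single (γ, r) 1)

variable {R}

theorem combAspherical_of_lift
    (Φ : FreeGroup α →* CoindExt (PresentedGroup R) (Multiplicative (PresentedGroup R × R →₀ ℤ)))
    (hright : ∀ f, (Φ f).right = pgMk R f) (hrel : ∀ r : R, Φ r = inl (relatorBasis R r)) :
    CombAspherical R := by
  refine combAspherical_of_ker_le fun w hw => ?_
  let χ : FreeGroup (FreeGroup α × R) →*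
      (PresentedGroup R → Multiplicative (PresentedGroup R × R →₀ ℤ)) :=
    FreeGroup.lift fun p => rightTransl _ _ (pgMk R p.1) (relatorBasis R p.2)
  have hχ : Φ.comp (idMap R) = inl.comp χ := FreeGroup.ext_hom _ _ fun p => by
    simp [χ, hrel, mul_inl_mul_inv, hright]
  have hχw : χ w = 1 := inl_injective <| by
    rw [← MonoidHom.comp_apply, ← hχ, MonoidHom.comp_apply, MonoidHom.mem_ker.mp hw, map_one,
      map_one]
  have hcoord : freeModuleCoord R = (Pi.evalMonoidHom _ 1).comp χ :=
    FreeGroup.ext_hom _ _ fun p => by simp [χ, freeModuleCoord, relatorBasis]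
  exact mem_normalClosure_peifferSet_of_freeModuleCoord_eq_one (MonoidHom.mem_ker.mp hw)
    (by rw [hcoord, MonoidHom.comp_apply, hχw, map_one])

end Criterion

section Amalgam

variable {M₁ M₂ I : Type} (L₁ : Set (FreeGroup M₁)) (L₂ : Set (FreeGroup M₂))
  (x : I → FreeGroup M₁) (y : I → FreeGroup M₂)

def amalgRels : Set (FreeGroup (M₁ ⊕ M₂)) :=
  (FreeGroup.map Sum.inl '' L₁) ∪ (FreeGroup.map Sum.inr '' L₂) ∪
    Set.range fun i => FreeGroup.map Sum.inl (x i) * (FreeGroup.map Sum.inr (y i))⁻¹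

/-- The two factors `⟨M₁ ∣ L₁⟩` and `⟨M₂ ∣ L₂⟩`, indexed by `Bool` as `PushoutI` requires. -/
abbrev factor : Bool → Type := fun b => Bool.rec (PresentedGroup L₂) (PresentedGroup L₁) b

instance : ∀ b, Group (factor L₁ L₂ b)
  | true => inferInstanceAs (Group (PresentedGroup L₁))
  | false => inferInstanceAs (Group (PresentedGroup L₂))

def factorEmbedding : ∀ b, FreeGroup I →* factor L₁ L₂ b
  | true => FreeGroup.lift fun i => pgMk L₁ (x i)
  | false => FreeGroup.lift fun i => pgMk L₂ (y i)

variable {L₁ L₂ x y}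

lemma map_inl_mem_amalgRels {l : FreeGroup M₁} (hl : l ∈ L₁) :
    FreeGroup.map Sum.inl l ∈ amalgRels L₁ L₂ x y :=
  .inl (.inl ⟨l, hl, rfl⟩)

lemma map_inr_mem_amalgRels {l : FreeGroup M₂} (hl : l ∈ L₂) :
    FreeGroup.map Sum.inr l ∈ amalgRels L₁ L₂ x y :=
  .inl (.inr ⟨l, hl, rfl⟩)

lemma mixed_mem_amalgRels (i : I) :
    FreeGroup.map Sum.inl (x i) * (FreeGroup.map Sum.inr (y i))⁻¹ ∈ amalgRels L₁ L₂ x y :=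
  .inr ⟨i, rfl⟩

variable (L₁ L₂ x y)

def toPushoutFree : FreeGroup (M₁ ⊕ M₂) →* PushoutI (factorEmbedding L₁ L₂ x y) :=
  FreeGroup.lift <| Sum.elim (fun m => PushoutI.of true (PresentedGroup.of m))
    fun m => PushoutI.of false (PresentedGroup.of m)

variable {L₁ L₂ x y}

lemma toPushoutFree_map_inl (w : FreeGroup M₁) :
    toPushoutFree L₁ L₂ x y (FreeGroup.map Sum.inl w) = PushoutI.of true (pgMk L₁ w) :=
  DFunLike.congr_fun (FreeGroup.ext_hom ((toPushoutFree L₁ L₂ x y).comp (FreeGroup.map Sum.inl))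
    ((PushoutI.of true).comp (pgMk L₁)) fun _ => rfl) w

lemma toPushoutFree_map_inr (w : FreeGroup M₂) :
    toPushoutFree L₁ L₂ x y (FreeGroup.map Sum.inr w) = PushoutI.of false (pgMk L₂ w) :=
  DFunLike.congr_fun (FreeGroup.ext_hom ((toPushoutFree L₁ L₂ x y).comp (FreeGroup.map Sum.inr))
    ((PushoutI.of false).comp (pgMk L₂)) fun _ => rfl) w

lemma toPushoutFree_eq_one {r : FreeGroup (M₁ ⊕ M₂)} (hr : r ∈ amalgRels L₁ L₂ x y) :
    toPushoutFree L₁ L₂ x y r = 1 := by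
  rcases hr with (⟨l, hl, rfl⟩ | ⟨l, hl, rfl⟩) | ⟨i, rfl⟩
  · rw [toPushoutFree_map_inl, pgMk_eq_one_of_mem hl, map_one]
  · rw [toPushoutFree_map_inr, pgMk_eq_one_of_mem hl, map_one]
  · rw [map_mul, map_inv, toPushoutFree_map_inl, toPushoutFree_map_inr, mul_inv_eq_one]
    simpa [factorEmbedding] using
      (PushoutI.of_apply_eq_base (factorEmbedding L₁ L₂ x y) true (FreeGroup.of i)).trans
        (PushoutI.of_apply_eq_base (factorEmbedding L₁ L₂ x y) false (FreeGroup.of i)).symm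

variable (L₁ L₂ x y)

def toPushout : PresentedGroup (amalgRels L₁ L₂ x y) →* PushoutI (factorEmbedding L₁ L₂ x y) :=
  PresentedGroup.toGroup fun _ => toPushoutFree_eq_one

variable {L₁ L₂ x y}

lemma toPushout_mk (w : FreeGroup (M₁ ⊕ M₂)) :
    toPushout L₁ L₂ x y (pgMk _ w) = toPushoutFree L₁ L₂ x y w := rfl

lemma mk_map_inl_eq_mk_map_inr (i : I) :
    pgMk (amalgRels L₁ L₂ x y) (FreeGroup.map Sum.inl (x i)) =
      pgMk (amalgRels L₁ L₂ x y) (FreeGroup.map Sum.inr (y i)) := by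
  rw [← mul_inv_eq_one, ← map_inv, ← map_mul]
  exact pgMk_eq_one_of_mem (mixed_mem_amalgRels i)

theorem exists_lift_amalgRels_of_lifts {A : Type*} [CommGroup A]
    {E : amalgRels L₁ L₂ x y → PresentedGroup (amalgRels L₁ L₂ x y) → A}
    (Φ₁ : FreeGroup M₁ →* CoindExt _ A) (Φ₂ : FreeGroup M₂ →* CoindExt _ A)
    (h₁ : ∀ w, (Φ₁ w).right = pgMk _ (FreeGroup.map Sum.inl w))
    (h₂ : ∀ w, (Φ₂ w).right = pgMk _ (FreeGroup.map Sum.inr w))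
    (hL₁ : ∀ l : L₁, Φ₁ l = inl (E ⟨_, map_inl_mem_amalgRels l.2⟩))
    (hL₂ : ∀ l : L₂, Φ₂ l = inl (E ⟨_, map_inr_mem_amalgRels l.2⟩))
    (hmixed : ∀ i, Φ₁ (x i) = inl (E ⟨_, mixed_mem_amalgRels i⟩) * Φ₂ (y i)) :
    ∃ Φ : FreeGroup (M₁ ⊕ M₂) →* CoindExt _ A,
      (∀ f, (Φ f).right = pgMk _ f) ∧ ∀ r : amalgRels L₁ L₂ x y, Φ r = inl (E r) := by
  let Φ := FreeGroup.lift (Sum.elim (Φ₁ ∘ FreeGroup.of) (Φ₂ ∘ FreeGroup.of))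
  have hΦ₁ : Φ.comp (FreeGroup.map Sum.inl) = Φ₁ := FreeGroup.ext_hom _ _ fun _ => by simp [Φ]
  have hΦ₂ : Φ.comp (FreeGroup.map Sum.inr) = Φ₂ := FreeGroup.ext_hom _ _ fun _ => by simp [Φ]
  have hright : rightHom.comp Φ = pgMk _ := FreeGroup.ext_hom _ _ fun
    | .inl m => by simpa [Φ] using h₁ (FreeGroup.of m)
    | .inr m => by simpa [Φ] using h₂ (FreeGroup.of m)
  refine ⟨Φ, DFunLike.congr_fun hright, ?_⟩
  rintro ⟨_, (⟨l, hl, rfl⟩ | ⟨l, hl, rfl⟩) | ⟨i, rfl⟩⟩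
  · exact (DFunLike.congr_fun hΦ₁ l).trans (hL₁ ⟨l, hl⟩)
  · exact (DFunLike.congr_fun hΦ₂ l).trans (hL₂ ⟨l, hl⟩)
  · rw [map_mul, map_inv, ← MonoidHom.comp_apply Φ, ← MonoidHom.comp_apply Φ, hΦ₁, hΦ₂, hmixed,
      mul_inv_cancel_right]

variable (hx : Function.Injective (FreeGroup.lift fun i => pgMk L₁ (x i)))
  (hy : Function.Injective (FreeGroup.lift fun i => pgMk L₂ (y i)))
include hx hy

lemma factorEmbedding_injective : ∀ b, Function.Injective (factorEmbedding L₁ L₂ x y b)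
  | true => hx
  | false => hy

lemma ker_mk_comp_map_inl :
    ((pgMk (amalgRels L₁ L₂ x y)).comp (FreeGroup.map Sum.inl)).ker = normalClosure L₁ := by
  refine le_antisymm (fun w hw => ?_)
    (normalClosure_le_normal fun l hl => pgMk_eq_one_of_mem (map_inl_mem_amalgRels hl))
  rw [← pgMk_eq_one_iff]
  apply PushoutI.of_injective (factorEmbedding_injective hx hy) true
  rw [map_one, ← toPushoutFree_map_inl, ← toPushout_mk,
    show pgMk _ (FreeGroup.map _ w) = 1 from hw, map_one]

lemma ker_mk_comp_map_inr :
    ((pgMk (amalgRels L₁ L₂ x y)).comp (FreeGroup.map Sum.inr)).ker = normalClosure L₂ := by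
  refine le_antisymm (fun w hw => ?_)
    (normalClosure_le_normal fun l hl => pgMk_eq_one_of_mem (map_inr_mem_amalgRels hl))
  rw [← pgMk_eq_one_iff]
  apply PushoutI.of_injective (factorEmbedding_injective hx hy) false
  rw [map_one, ← toPushoutFree_map_inr, ← toPushout_mk,
    show pgMk _ (FreeGroup.map _ w) = 1 from hw, map_one]

lemma injective_mk_comp_map_inl_comp_lift :
    Function.Injective
      (((pgMk (amalgRels L₁ L₂ x y)).comp (FreeGroup.map Sum.inl)).comp (FreeGroup.lift x)) := by
  have h : (toPushout L₁ L₂ x y).comp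
      (((pgMk _).comp (FreeGroup.map Sum.inl)).comp (FreeGroup.lift x)) = PushoutI.base _ :=
    FreeGroup.ext_hom _ _ fun i => by
      simpa [toPushout_mk, toPushoutFree_map_inl, factorEmbedding] using
        PushoutI.of_apply_eq_base (factorEmbedding L₁ L₂ x y) true (FreeGroup.of i)
  refine Function.Injective.of_comp (f := toPushout L₁ L₂ x y) ?_
  rw [← MonoidHom.coe_comp, h]
  exact PushoutI.base_injective (factorEmbedding_injective hx hy)

theorem exists_lift_amalgRels (h₁ : CombAspherical L₁) (h₂ : CombAspherical L₂)
    {A : Type*} [CommGroup A]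
    (E : amalgRels L₁ L₂ x y → PresentedGroup (amalgRels L₁ L₂ x y) → A) :
    ∃ Φ : FreeGroup (M₁ ⊕ M₂) →* CoindExt _ A,
      (∀ f, (Φ f).right = pgMk _ f) ∧ ∀ r : amalgRels L₁ L₂ x y, Φ r = inl (E r) := by
  obtain ⟨Φ₁, hΦ₁, hL₁⟩ := exists_lift_of_combAspherical h₁ _ (ker_mk_comp_map_inl hx hy)
    fun l => E ⟨_, map_inl_mem_amalgRels l.2⟩
  obtain ⟨Φ₂, hΦ₂, hL₂⟩ := exists_lift_of_combAspherical h₂ _ (ker_mk_comp_map_inr hx hy)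
    fun l => E ⟨_, map_inr_mem_amalgRels l.2⟩
  let Θ : FreeGroup I →* CoindExt _ A :=
    FreeGroup.lift fun i => inl (E ⟨_, mixed_mem_amalgRels i⟩) * Φ₂ (y i)
  have hΘ : rightHom.comp Θ = ((pgMk _).comp (FreeGroup.map Sum.inl)).comp (FreeGroup.lift x) :=
    FreeGroup.ext_hom _ _ fun i => by simp [Θ, hΦ₂, mk_map_inl_eq_mk_map_inr]
  -- Conjugate `Φ₁` so that it agrees with `Φ₂` on the amalgamating relators.
  obtain ⟨c, hc⟩ := exists_conj_eq_of_right_eq (injective_mk_comp_map_inl_comp_lift hx hy)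
    (Φ₁.comp (FreeGroup.lift x)) Θ (fun _ => hΦ₁ _) (DFunLike.congr_fun hΘ)
  refine exists_lift_amalgRels_of_lifts ((MulAut.conj (inl c)).toMonoidHom.comp Φ₁) Φ₂
    (fun w => by simp [hΦ₁]) hΦ₂ (fun l => by simp [hL₁, ← map_inv, ← map_mul, mul_inv_cancel_comm])
    hL₂ fun i => ?_
  simpa [Θ] using (hc (FreeGroup.of i)).symm

end Amalgam

/-- Combination lemma for amalgamated products: if `⟨M₁ ∣ L₁⟩` and `⟨M₂ ∣ L₂⟩`
are combinatorially aspherical and the families `{xᵢ}`, `{yᵢ}` freely generate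
free subgroups of the respective groups, then the standard presentation
`P = ⟨M₁, M₂ ∣ L₁, L₂, xᵢ yᵢ⁻¹⟩` of the amalgamated product is combinatorially
aspherical. -/
theorem amalgam_combinatorially_aspherical {M₁ M₂ I : Type}
    (L₁ : Set (FreeGroup M₁)) (L₂ : Set (FreeGroup M₂))
    (x : I → FreeGroup M₁) (y : I → FreeGroup M₂) :
    let ι₁ : FreeGroup M₁ →* FreeGroup (M₁ ⊕ M₂) := FreeGroup.map Sum.inl
    let ι₂ : FreeGroup M₂ →* FreeGroup (M₁ ⊕ M₂) := FreeGroup.map Sum.inr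
    let R : Set (FreeGroup (M₁ ⊕ M₂)) :=
      (ι₁ '' L₁) ∪ (ι₂ '' L₂) ∪ Set.range fun i => ι₁ (x i) * (ι₂ (y i))⁻¹
    CombAspherical L₁ → CombAspherical L₂ →
    Function.Injective
      (FreeGroup.lift (fun i => pgMk L₁ (x i)) : FreeGroup I →* PresentedGroup L₁) →
    Function.Injective
      (FreeGroup.lift (fun i => pgMk L₂ (y i)) : FreeGroup I →* PresentedGroup L₂) →
    CombAspherical R := by
  intro _ _ _ h₁ h₂ hx hy
  obtain ⟨Φ, hright, hrel⟩ := exists_lift_amalgRels hx hy h₁ h₂ (relatorBasis _)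
  exact combAspherical_of_lift Φ hright hrel

end Paper
end

section
/- The subgroup E of H(A) generated by the elements μ(a) = u_a v_a (a ∈ A) is free, freely generated by {μ(a) : a ∈ A}. -/
namespace Paper

/-- Evaluate a signed word in a group, via a map on letters. -/
def evalWord {α G : Type} [Group G] (f : α → G) (w : List (α × Bool)) : G :=
  (w.map fun p => if p.2 then f p.1 else (f p.1)⁻¹).prod

/-- Evaluate a positive word in a group, via a map on letters. -/
def evalPos {α G : Type} [Group G] (f : α → G) (w : List α) : G :=
  (w.map f).prod

end Paper
namespace Paper

/-- The alphabet of the group `H(A)`: the disjoint union of `A` and the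
two-letter alphabets `B`, `X`, `Y` (each modelled by `Bool`). -/
abbrev HL (A : Type) : Type := A ⊕ (Bool ⊕ (Bool ⊕ Bool))

def inA {A : Type} (a : A) : HL A := Sum.inl a
def inB {A : Type} (b : Bool) : HL A := Sum.inr (Sum.inl b)
def inX {A : Type} (x : Bool) : HL A := Sum.inr (Sum.inr (Sum.inl x))
def inY {A : Type} (y : Bool) : HL A := Sum.inr (Sum.inr (Sum.inr y))

def gA {A : Type} (a : A) : FreeGroup (HL A) := FreeGroup.of (inA a)
def gB {A : Type} (b : Bool) : FreeGroup (HL A) := FreeGroup.of (inB b)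
def gX {A : Type} (x : Bool) : FreeGroup (HL A) := FreeGroup.of (inX x)
def gY {A : Type} (y : Bool) : FreeGroup (HL A) := FreeGroup.of (inY y)

/-- The defining data of the group `H(A)`: the maps
`β, β' : A×X → B*`, `χ, χ' : A×X → Y*`, `φ : A×Y → B*`,
`γ : B×Y → Y*`, `ψ : B×X → Y*`. -/
structure HData (A : Type) where
  bet : A → Bool → List Bool
  bet' : A → Bool → List Bool
  chi : A → Bool → List Bool
  chi' : A → Bool → List Bool
  phi : A → Bool → List Bool
  gam : Bool → Bool → List Bool
  psi : Bool → Bool → List Bool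

/-- The defining relators of `H(A)`:
`x a = β(a,x) a β'(a,x) χ(a,x) x χ'(a,x)`, `y a = a φ(a,y) y`,
`x b = b ψ(b,x) x`, `y b = b γ(b,y)`. -/
def HRels {A : Type} (d : HData A) : Set (FreeGroup (HL A)) :=
  { r | ∃ a x, r = gX x * gA a *
      (evalPos gB (d.bet a x) * gA a * evalPos gB (d.bet' a x) *
       evalPos gY (d.chi a x) * gX x * evalPos gY (d.chi' a x))⁻¹ } ∪
  { r | ∃ a y, r = gY y * gA a *
      (gA a * evalPos gB (d.phi a y) * gY y)⁻¹ } ∪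
  { r | ∃ b x, r = gX x * gB b *
      (gB b * evalPos gY (d.psi b x) * gX x)⁻¹ } ∪
  { r | ∃ b y, r = gY y * gB b *
      (gB b * evalPos gY (d.gam b y))⁻¹ }

/-- The group `H(A)`. -/
abbrev HGroup {A : Type} (d : HData A) : Type := PresentedGroup (HRels d)

/-- The small cancellation assumptions on the defining data of `H(A)`: the set
of large sections `χ(A×X) ∪ χ'(A×X) ∪ γ(B×Y) ∪ ψ(B×X)` satisfies `C'(1/12)`,
and so does the set `β(A×X) ∪ β'(A×X) ∪ φ(A×Y)`. -/
def HData.C12cond {A : Type} (d : HData A) : Prop :=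
  posC12 ((Set.range fun p : A × Bool => d.chi p.1 p.2) ∪
          (Set.range fun p : A × Bool => d.chi' p.1 p.2) ∪
          (Set.range fun p : Bool × Bool => d.gam p.1 p.2) ∪
          (Set.range fun p : Bool × Bool => d.psi p.1 p.2)) ∧
  posC12 ((Set.range fun p : A × Bool => d.bet p.1 p.2) ∪
          (Set.range fun p : A × Bool => d.bet' p.1 p.2) ∪
          (Set.range fun p : A × Bool => d.phi p.1 p.2))

/-- The homomorphism from the free group on `A ∪ B` to `H(A)` induced by the
generators. -/
def homAB {A : Type} (d : HData A) : FreeGroup (A ⊕ Bool) →* HGroup d :=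
  FreeGroup.lift fun c => PresentedGroup.of (Sum.elim inA inB c)

/-- The homomorphism from the free group on `X ∪ Y` to `H(A)` induced by the
generators. -/
def homXY {A : Type} (d : HData A) : FreeGroup (Bool ⊕ Bool) →* HGroup d :=
  FreeGroup.lift fun c => PresentedGroup.of (Sum.elim inX inY c)

end Paper
namespace Paper

/-- The blocks `u_a` (positive words in `A`) and `v_a` (positive words in `X`). -/
structure MuData (A : Type) where
  u : A → List A
  v : A → List Bool

/-- The standing assumptions on the blocks: both families consist of nonempty
positive words and satisfy `C'(1/12)`. -/
def MuData.OK {A : Type} (md : MuData A) : Prop :=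
  FamC12 (fun a => signed (md.u a)) ∧ FamC12 (fun a => signed (md.v a)) ∧
  (∀ a, md.u a ≠ []) ∧ (∀ a, md.v a ≠ [])

/-- The element `μ(a) = u_a v_a` of `H(A)`. -/
def muH {A : Type} (d : HData A) (md : MuData A) (a : A) : HGroup d :=
  evalPos (fun a' => (PresentedGroup.of (inA a') : HGroup d)) (md.u a) *
  evalPos (fun x => (PresentedGroup.of (inX x) : HGroup d)) (md.v a)

/-- The subgroup `E = ⟨μ(a) : a ∈ A⟩` of `H(A)`. -/
def Esub {A : Type} (d : HData A) (md : MuData A) : Subgroup (HGroup d) :=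
  Subgroup.closure (Set.range (muH d md))

end Paper

/-! The retraction of `H(A)` onto the free group `F(A)` that kills `B`, `X` and `Y` sends
`μ(a)` to `u_a`, so it suffices that the positive words `u_a` freely generate a free subgroup
of `F(A)`. Map a reduced word `a₁^{±1} ⋯ aₙ^{±1}` to the product of the blocks `u_{aᵢ}^{±1}`.
Since the `u_a` are positive, neighbouring blocks can only cancel when they have opposite signs,
hence different indices, and what cancels is then a common suffix or prefix of two different
`u_a`: a piece, shorter than a twelfth of either word. Inductively, the reduced product ends with
more than eleven twelfths of its last block, so it is not trivial. -/

theorem List.IsSuffix.invRev {α : Type*} {L₁ L₂ : List (α × Bool)} (h : L₁ <:+ L₂) :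
    FreeGroup.invRev L₁ <+: FreeGroup.invRev L₂ :=
  List.reverse_prefix.mpr (h.map _)

theorem List.IsPrefix.invRev {α : Type*} {L₁ L₂ : List (α × Bool)} (h : L₁ <+: L₂) :
    FreeGroup.invRev L₁ <:+ FreeGroup.invRev L₂ :=
  List.reverse_suffix.mpr (h.map _)

namespace FreeGroup

variable {α : Type*} [DecidableEq α]

theorem IsReduced.exists_reduce_append {L₁ L₂ : List (α × Bool)}
    (h₁ : IsReduced L₁) (h₂ : IsReduced L₂) :
    ∃ P C S, L₁ = P ++ invRev C ∧ L₂ = C ++ S ∧ reduce (L₁ ++ L₂) = P ++ S := by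
  induction L₂ generalizing L₁ with
  | nil => exact ⟨L₁, [], [], by simp [invRev], rfl, by simpa using h₁.reduce_eq⟩
  | cons y t ih =>
    rcases L₁.eq_nil_or_concat with rfl | ⟨t₁, x, rfl⟩
    · exact ⟨[], [], y :: t, rfl, rfl, by simpa using h₂.reduce_eq⟩
    rw [List.concat_eq_append] at h₁ ⊢
    by_cases hxy : x = (y.1, !y.2)
    · subst hxy
      obtain ⟨P, C, S, rfl, rfl, hred⟩ :=
        ih (h₁.infix (List.prefix_append _ _).isInfix) (h₂.infix (List.suffix_cons _ _).isInfix)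
      refine ⟨P, y :: C, S, by simp [invRev], rfl, ?_⟩
      have hstep : Red.Step (P ++ invRev C ++ [(y.1, !y.2)] ++ y :: (C ++ S))
          (P ++ invRev C ++ (C ++ S)) := by
        simpa using Red.Step.not (L₁ := P ++ invRev C) (L₂ := C ++ S) (x := y.1) (b := !y.2)
      rw [reduce.Step.eq hstep, hred]
    · refine ⟨t₁ ++ [x], [], y :: t, by simp [invRev], rfl, IsReduced.reduce_eq ?_⟩
      refine List.IsChain.append h₁ h₂ fun a ha b hb hab => ?_
      simp only [List.getLast?_append, List.getLast?_singleton, Option.some_or,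
        Option.mem_def, Option.some.injEq, List.head?_cons] at ha hb
      subst ha hb
      by_contra hne
      exact hxy (Prod.ext hab (Bool.eq_not.mpr hne))

end FreeGroup

namespace Paper

open FreeGroup

section Suffix

variable {β : Type*}

def LongSuffix (s W : List β) : Prop := s <:+ W ∧ 11 * W.length < 12 * s.length

theorem LongSuffix.ne_nil {s W : List β} (h : LongSuffix s W) : s ≠ [] := by
  rintro rfl
  simpa using h.2

variable {α : Type*} [DecidableEq α]

/-- The cancelled part `C⁻¹` of `L₁` either lies inside `s`, and is then a short piece, or
contains `s`, which would then be a piece too long to be one. -/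
theorem exists_longSuffix_reduce_append {W L₁ L₂ s : List (α × Bool)}
    (h₁ : IsReduced L₁) (h₂ : IsReduced L₂) (hL₂ : L₂ ≠ []) (hs : LongSuffix s W)
    (hsL₁ : s <:+ L₁)
    (hpiece : ∀ t, t ≠ [] → t <:+ W → invRev t <+: L₂ →
      12 * t.length < min W.length L₂.length) :
    ∃ s', LongSuffix s' L₂ ∧ s' <:+ reduce (L₁ ++ L₂) := by
  obtain ⟨P, C, S, rfl, rfl, hred⟩ := h₁.exists_reduce_append h₂
  refine ⟨S, ⟨List.suffix_append _ _, ?_⟩, hred ▸ List.suffix_append _ _⟩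
  suffices 12 * C.length < (C ++ S).length by simp only [List.length_append] at this ⊢; omega
  obtain rfl | hC := eq_or_ne C []
  · simpa using List.length_pos_iff.mpr hL₂
  rcases le_total (invRev C).length s.length with hle | hle
  · have hCs : invRev C <:+ s :=
      List.suffix_of_suffix_length_le (List.suffix_append _ _) hsL₁ hle
    have := hpiece (invRev C) (by simpa [invRev] using hC) (hCs.trans hs.1)
      (by rw [invRev_invRev]; exact List.prefix_append _ _)
    rw [invRev_length] at this
    omega
  · have hsC : s <:+ invRev C :=
      List.suffix_of_suffix_length_le hsL₁ (List.suffix_append _ _) hle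
    have := hpiece s hs.ne_nil hs.1
      ((invRev_invRev (L₁ := C) ▸ hsC.invRev).trans (List.prefix_append _ _))
    have := hs.2
    omega

end Suffix

section FamC12

variable {ι α : Type} {w : ι → List (α × Bool)}

theorem FamC12.prefix_bound (hw : FamC12 w) {a b : ι} (hab : a ≠ b) {t : List (α × Bool)}
    (ha : t <+: w a) (hb : t <+: w b) : 12 * t.length < min (w a).length (w b).length :=
  hw a b (w a) (w b) ⟨0, .inl (List.rotate_zero _).symm⟩ ⟨0, .inl (List.rotate_zero _).symm⟩
    (fun h => hab h.1) t ha hb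

theorem FamC12.suffix_bound (hw : FamC12 w) {a b : ι} (hab : a ≠ b) {t : List (α × Bool)}
    (ha : t <:+ w a) (hb : t <:+ w b) : 12 * t.length < min (w a).length (w b).length := by
  obtain ⟨r, hr⟩ := ha
  obtain ⟨r', hr'⟩ := hb
  have := hw a b _ _ ⟨r.length, .inl rfl⟩ ⟨r'.length, .inl rfl⟩ (fun h => hab h.1) t
    (by rw [← hr, List.rotate_append_length_eq]; exact List.prefix_append _ _)
    (by rw [← hr', List.rotate_append_length_eq]; exact List.prefix_append _ _)
  simpa using this

end FamC12

section Blocks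

variable {ι α : Type} (u : ι → List α)

def blockWord (p : ι × Bool) : List (α × Bool) :=
  if p.2 then signed (u p.1) else invRev (signed (u p.1))

variable {u}

theorem blockWord_length (p : ι × Bool) : (blockWord u p).length = (u p.1).length := by
  unfold blockWord; split <;> simp [signed, invRev_length]

theorem snd_of_mem_blockWord {p : ι × Bool} {x : α × Bool} (hx : x ∈ blockWord u p) :
    x.2 = p.2 := by
  obtain ⟨i, _ | _⟩ := p <;> simp only [blockWord, signed, invRev, Bool.false_eq_true,
    ↓reduceIte, List.mem_reverse, List.mem_map] at hx <;> grind

theorem blockWord_ne_nil (hne : ∀ i, u i ≠ []) (p : ι × Bool) : blockWord u p ≠ [] := by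
  rw [← List.length_pos_iff, blockWord_length]
  exact List.length_pos_iff.mpr (hne p.1)

theorem isReduced_blockWord (p : ι × Bool) : IsReduced (blockWord u p) :=
  (List.pairwise_of_forall_mem_list fun x hx y hy _ => by
    rw [snd_of_mem_blockWord hx, snd_of_mem_blockWord hy]).isChain

theorem lift_mk_singleton (p : ι × Bool) :
    FreeGroup.lift (fun i => FreeGroup.mk (signed (u i))) (FreeGroup.mk [p]) =
      FreeGroup.mk (blockWord u p) := by
  obtain ⟨i, _ | _⟩ := p
  · rw [show FreeGroup.mk [(i, false)] = (FreeGroup.of i)⁻¹ from rfl, _root_.map_inv,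
      lift_apply_of, inv_mk]
    rfl
  · exact lift_apply_of

theorem blockWord_piece_bound (hu : FamC12 fun i => signed (u i)) {q p : ι × Bool}
    (hqp : q.1 = p.1 → q.2 = p.2) {t : List (α × Bool)} (ht : t ≠ [])
    (hq : t <:+ blockWord u q) (hp : invRev t <+: blockWord u p) :
    12 * t.length < min (blockWord u q).length (blockWord u p).length := by
  obtain ⟨x, hx⟩ := List.exists_mem_of_ne_nil t ht
  have hxq : x.2 = q.2 := snd_of_mem_blockWord (hq.subset hx)
  have hxp : (!x.2) = p.2 := snd_of_mem_blockWord (u := u) (x := (x.1, !x.2))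
    (hp.subset (by simp only [invRev, List.mem_reverse, List.mem_map]; exact ⟨x, hx, rfl⟩))
  have hsign : q.2 ≠ p.2 := by rw [← hxq, ← hxp]; exact (Bool.not_ne_self _).symm
  have hne : q.1 ≠ p.1 := fun h => hsign (hqp h)
  obtain ⟨i, _ | _⟩ := q <;> obtain ⟨j, _ | _⟩ := p
  · exact absurd rfl hsign
  · have hq' : invRev t <+: signed (u i) := by simpa [blockWord, invRev_invRev] using hq.invRev
    have hp' : invRev t <+: signed (u j) := by simpa [blockWord] using hp
    simpa [blockWord_length, signed, invRev_length] using hu.prefix_bound hne hq' hp'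
  · have hq' : t <:+ signed (u i) := by simpa [blockWord] using hq
    have hp' : t <:+ signed (u j) := by simpa [blockWord, invRev_invRev] using hp.invRev
    simpa [blockWord_length, signed] using hu.suffix_bound hne hq' hp'
  · exact absurd rfl hsign

theorem exists_longSuffix_toWord_lift [DecidableEq α] (hu : FamC12 fun i => signed (u i))
    (hne : ∀ i, u i ≠ []) (w : List (ι × Bool)) (p : ι × Bool) (hw : IsReduced (w ++ [p])) :
    ∃ s, LongSuffix s (blockWord u p) ∧
      s <:+ (FreeGroup.lift (fun i => FreeGroup.mk (signed (u i)))
        (FreeGroup.mk (w ++ [p]))).toWord := by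
  induction w using List.reverseRecOn generalizing p with
  | nil =>
    refine ⟨blockWord u p, ⟨List.suffix_refl _, ?_⟩, ?_⟩
    · have := List.length_pos_iff.mpr (blockWord_ne_nil hne p)
      omega
    · rw [List.nil_append, lift_mk_singleton, toWord_mk, (isReduced_blockWord p).reduce_eq]
  | append_singleton l q ih =>
    obtain ⟨s, hs, hsw⟩ := ih q (hw.infix (List.prefix_append _ _).isInfix)
    have hqp : q.1 = p.1 → q.2 = p.2 := by
      have : IsReduced [q, p] := hw.infix ⟨l, [], by simp⟩
      exact (isReduced_cons_cons.mp this).1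
    rw [← mul_mk, _root_.map_mul, toWord_mul, lift_mk_singleton, toWord_mk,
      (isReduced_blockWord p).reduce_eq]
    exact exists_longSuffix_reduce_append isReduced_toWord (isReduced_blockWord p)
      (blockWord_ne_nil hne p) hs hsw
      fun t ht htq htp => blockWord_piece_bound hu hqp ht htq htp

end Blocks

theorem lift_mk_signed_injective {ι α : Type} (u : ι → List α)
    (hu : FamC12 fun i => signed (u i)) (hne : ∀ i, u i ≠ []) :
    Function.Injective (FreeGroup.lift fun i => (FreeGroup.mk (signed (u i)) : FreeGroup α)) := by
  classical
  refine (injective_iff_map_eq_one _).mpr fun g hg => ?_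
  by_contra hg1
  obtain ⟨w, p, hwp⟩ :=
    g.toWord.eq_nil_or_concat.resolve_left (toWord_eq_nil_iff.not.mpr hg1)
  rw [List.concat_eq_append] at hwp
  obtain ⟨s, hs, hsw⟩ := exists_longSuffix_toWord_lift hu hne w p (hwp ▸ isReduced_toWord)
  rw [← hwp, mk_toWord, hg, toWord_one, List.suffix_nil] at hsw
  exact hs.ne_nil hsw

theorem evalPos_of_eq_mk_signed {α : Type} (l : List α) :
    evalPos FreeGroup.of l = FreeGroup.mk (signed l) := by
  induction l with
  | nil => rfl
  | cons c t ih =>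
    simp only [evalPos, List.map_cons, List.prod_cons] at ih ⊢
    rw [ih, FreeGroup.of, mul_mk]
    rfl

theorem map_evalPos {α G H : Type} [Group G] [Group H] (φ : G →* H) (f : α → G) (w : List α) :
    φ (evalPos f w) = evalPos (fun a => φ (f a)) w := by
  simp [evalPos, map_list_prod, Function.comp_def]

theorem evalPos_one {α G : Type} [Group G] (w : List α) : evalPos (fun _ => (1 : G)) w = 1 := by
  simp [evalPos]

section Retraction

variable {A : Type}

/-- Each relator of `H(A)` carries the same letters of `A` on both sides, so killing `B`, `X`, `Y`
defines a retraction onto the free group on `A`. -/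
def projA (d : HData A) : HGroup d →* FreeGroup A :=
  PresentedGroup.toGroup (f := Sum.elim FreeGroup.of fun _ => 1) (by
    rintro r (((⟨a, x, rfl⟩ | ⟨a, y, rfl⟩) | ⟨b, x, rfl⟩) | ⟨b, y, rfl⟩) <;>
      simp [gA, gB, gX, gY, inA, inB, inX, inY, map_evalPos, evalPos_one])

theorem projA_muH (d : HData A) (md : MuData A) (a : A) :
    projA d (muH d md a) = FreeGroup.mk (signed (md.u a)) := by
  simp [muH, map_evalPos, projA, inA, inX, evalPos_of_eq_mk_signed, evalPos_one]

end Retraction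

theorem E_free_on_mu_general {A : Type} (d : HData A)
    (md : MuData A) (hmd : md.OK) :
    Function.Injective (FreeGroup.lift (muH d md) : FreeGroup A →* HGroup d) := by
  have hcomp : (projA d).comp (FreeGroup.lift (muH d md)) =
      FreeGroup.lift fun a => FreeGroup.mk (signed (md.u a)) :=
    FreeGroup.ext_hom _ _ fun a => by simp [projA_muH]
  refine Function.Injective.of_comp (f := projA d) ?_
  rw [← MonoidHom.coe_comp, hcomp]
  exact lift_mk_signed_injective md.u hmd.1 hmd.2.2.1

/-- The subgroup `E` of `H(A)` generated by the elements `μ(a) = u_a v_a`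
(`a ∈ A`) is free, freely generated by `{μ(a) : a ∈ A}`: the induced
homomorphism from the free group on `A` is injective. -/
theorem E_free_on_mu {A : Type} (d : HData A) (hC : d.C12cond)
    (md : MuData A) (hmd : md.OK) :
    Function.Injective (FreeGroup.lift (muH d md) : FreeGroup A →* HGroup d) :=
  E_free_on_mu_general d md hmd

end Paper
end
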